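/- Let V be a real inner product space, let v₁, …, v_k be orthonormal vectors in V, let G be the subspace spanned by v₁, …, v_k, and let H be a subspace of V. Then for all unit vectors g ∈ G and h ∈ H, ⟨g, h⟩² ≤ Σ_{j=1}^k ‖Π_H v_j‖², where Π_H denotes orthogonal projection onto H. -/

import Mathlib

open MeasureTheory ProbabilityTheory Real Filter
open scoped ENNReal InnerProductSpace RealInnerProductSpace

noncomputable section

/-- The squared 2-Wasserstein cost between two measures on `ℝ`:
the infimum over all couplings `π` (measures on `ℝ × ℝ` with the prescribed marginals)
of `∫ (x − y)² dπ`. -/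
def W2sq (μ ν : Measure ℝ) : ℝ≥0∞ :=
  ⨅ pl : {pl : Measure (ℝ × ℝ) // pl.map Prod.fst = μ ∧ pl.map Prod.snd = ν},
    ∫⁻ q, ENNReal.ofReal ((q.1 - q.2) ^ 2) ∂(pl : Measure (ℝ × ℝ))

/-- The 2-Wasserstein distance `d_{W2}` between two probability measures on `ℝ`. -/
def W2 (μ ν : Measure ℝ) : ℝ := Real.sqrt (W2sq μ ν).toReal

/-- The standard Gaussian measure `Φ = N(0,1)` on `ℝ`. -/
def stdGaussian : Measure ℝ := gaussianReal 0 1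

/-- `u♯ν` : the pushforward of `ν` along `x ↦ ⟪u, x⟫`, i.e. the distribution of `uᵀX`. -/
def projMeas {d : ℕ} (u : EuclideanSpace ℝ (Fin d))
    (ν : Measure (EuclideanSpace ℝ (Fin d))) : Measure ℝ :=
  ν.map (fun x => ⟪u, x⟫)

/-- The empirical measure `(1/n) ∑ᵢ δ_{y i}`. -/
def emp {n : ℕ} (y : Fin n → ℝ) : Measure ℝ :=
  (n : ℝ≥0∞)⁻¹ • ∑ i, Measure.dirac (y i)

/-- `d(ν, Φ) = sup_{‖u‖=1} d_{W2}(u♯ν, Φ)`. -/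
def dsup {d : ℕ} (ν : Measure (EuclideanSpace ℝ (Fin d))) : ℝ :=
  ⨆ u : {u : EuclideanSpace ℝ (Fin d) // ‖u‖ = 1}, W2 (projMeas u ν) stdGaussian

/-- `d(ν_{|S}, Φ)`, expressed (equivalently, by `u♯(ν_{|Q}) = (Qu)♯ν` for any matrix `Q` whose
columns form an orthonormal basis of `S`) as the sup of `d_{W2}(u♯ν, Φ)` over unit `u ∈ S`. -/
def dsupOn {d : ℕ} (S : Submodule ℝ (EuclideanSpace ℝ (Fin d)))
    (ν : Measure (EuclideanSpace ℝ (Fin d))) : ℝ :=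
  ⨆ u : {u : EuclideanSpace ℝ (Fin d) // ‖u‖ = 1 ∧ u ∈ S}, W2 (projMeas u ν) stdGaussian

/-- `d_min(ν_{|S}, Φ)` : the infimum of `d_{W2}(u♯ν, Φ)` over unit vectors `u ∈ S`. -/
def dminOn {d : ℕ} (S : Submodule ℝ (EuclideanSpace ℝ (Fin d)))
    (ν : Measure (EuclideanSpace ℝ (Fin d))) : ℝ :=
  ⨅ u : {u : EuclideanSpace ℝ (Fin d) // ‖u‖ = 1 ∧ u ∈ S}, W2 (projMeas u ν) stdGaussian

/-- A measure `ν` on `ℝ^d` with mean `m` is `σ`-subgaussian with (absolute) constant `C₀` :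
`P(‖X − m‖ ≥ t) ≤ C₀ e^{−t²/(2σ²)}` for all `t > 0`. -/
def IsSubgaussian {d : ℕ} (ν : Measure (EuclideanSpace ℝ (Fin d)))
    (m : EuclideanSpace ℝ (Fin d)) (σ C₀ : ℝ) : Prop :=
  ∀ t : ℝ, 0 < t → ν {x | t ≤ ‖x - m‖} ≤ ENNReal.ofReal (C₀ * Real.exp (-t ^ 2 / (2 * σ ^ 2)))

/-- A measure `ν` on `ℝ` with mean `m` is `σ`-subgaussian with (absolute) constant `C₀`. -/
def IsSubgaussianR (ν : Measure ℝ) (m : ℝ) (σ C₀ : ℝ) : Prop :=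
  ∀ t : ℝ, 0 < t → ν {x | t ≤ |x - m|} ≤ ENNReal.ofReal (C₀ * Real.exp (-t ^ 2 / (2 * σ ^ 2)))

/-- Mean zero and identity covariance (`E X = 0`, `E[XXᵀ] = I`). -/
def IsIsotropic {d : ℕ} (ν : Measure (EuclideanSpace ℝ (Fin d))) : Prop :=
  (∫ x, x ∂ν) = 0 ∧ ∀ u v : EuclideanSpace ℝ (Fin d), (∫ x, ⟪u, x⟫ * ⟪v, x⟫ ∂ν) = ⟪u, v⟫

/-- The joint distribution of an i.i.d. sample of size `n` from `ν`. -/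
def sample {d : ℕ} (n : ℕ) (ν : Measure (EuclideanSpace ℝ (Fin d))) :
    Measure (Fin n → EuclideanSpace ℝ (Fin d)) :=
  Measure.pi fun _ => ν

/-- The orthogonal projections `Π_S X` and `Π_{Sᗮ} X` are independent under `ν`. -/
def IndepProj {d : ℕ} (ν : Measure (EuclideanSpace ℝ (Fin d)))
    (S : Submodule ℝ (EuclideanSpace ℝ (Fin d))) : Prop :=
  ν.map (fun x => ((Submodule.orthogonalProjectionOnto S x : EuclideanSpace ℝ (Fin d)),
                   (Submodule.orthogonalProjectionOnto Sᗮ x : EuclideanSpace ℝ (Fin d)))) =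
    (ν.map fun x => (Submodule.orthogonalProjectionOnto S x : EuclideanSpace ℝ (Fin d))).prod
      (ν.map fun x => (Submodule.orthogonalProjectionOnto Sᗮ x : EuclideanSpace ℝ (Fin d)))

/-
Writing `g = ∑ⱼ cⱼ vⱼ` with `∑ⱼ cⱼ² = ‖g‖² = 1`, Cauchy–Schwarz in `ℝᵏ` gives
`⟪g, h⟫² ≤ ∑ⱼ ⟪vⱼ, h⟫²`. Since `h ∈ H`, `⟪vⱼ, h⟫ = ⟪Π_H vⱼ, h⟫`, and Cauchy–Schwarz in `V`
bounds this by `‖Π_H vⱼ‖ ‖h‖ = ‖Π_H vⱼ‖`.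
-/
section

variable {V : Type*} [NormedAddCommGroup V] [InnerProductSpace ℝ V]

theorem real_inner_sq_le_norm_sq_mul_norm_sq (x y : V) : ⟪x, y⟫ ^ 2 ≤ ‖x‖ ^ 2 * ‖y‖ ^ 2 := by
  rw [← mul_pow, ← sq_abs]
  exact pow_le_pow_left₀ (abs_nonneg _) (abs_real_inner_le_norm x y) 2

theorem Orthonormal.norm_sum_smul_sq {ι : Type*} [Fintype ι] {v : ι → V} (hv : Orthonormal ℝ v)
    (c : ι → ℝ) : ‖∑ i, c i • v i‖ ^ 2 = ∑ i, c i ^ 2 := by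
  rw [← real_inner_self_eq_norm_sq, hv.inner_sum]
  simp only [conj_trivial, sq]

theorem Orthonormal.sq_inner_le_of_mem_span {ι : Type*} [Fintype ι] {v : ι → V}
    (hv : Orthonormal ℝ v) {g : V} (hg : g ∈ Submodule.span ℝ (Set.range v)) (x : V) :
    ⟪g, x⟫ ^ 2 ≤ ‖g‖ ^ 2 * ∑ i, ⟪v i, x⟫ ^ 2 := by
  obtain ⟨c, rfl⟩ := (Submodule.mem_span_range_iff_exists_fun ℝ).mp hg
  simp only [hv.norm_sum_smul_sq, sum_inner, real_inner_smul_left]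
  exact Finset.sum_mul_sq_le_sq_mul_sq _ _ _

theorem sq_inner_le_norm_orthogonalProjectionOnto_sq_mul (H : Submodule ℝ V)
    [H.HasOrthogonalProjection] (x : V) {h : V} (hh : h ∈ H) :
    ⟪x, h⟫ ^ 2 ≤ ‖(H.orthogonalProjectionOnto x : V)‖ ^ 2 * ‖h‖ ^ 2 := by
  rw [← H.inner_orthogonalProjectionOnto_eq_of_mem_right ⟨h, hh⟩ x]
  exact real_inner_sq_le_norm_sq_mul_norm_sq _ _

end

/-- for orthonormal `v₁, …, v_k` spanning `G`, a subspace `H`, and unit vectors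
`g ∈ G`, `h ∈ H`, one has `⟪g, h⟫² ≤ ∑ⱼ ‖Π_H vⱼ‖²`. -/
theorem statement12 {V : Type*} [NormedAddCommGroup V] [InnerProductSpace ℝ V]
    {k : ℕ} (v : Fin k → V) (hv : Orthonormal ℝ v)
    (H : Submodule ℝ V) [Submodule.HasOrthogonalProjection H]
    (g h : V) (hg : g ∈ Submodule.span ℝ (Set.range v)) (hh : h ∈ H)
    (hgn : ‖g‖ = 1) (hhn : ‖h‖ = 1) :
    ⟪g, h⟫ ^ 2 ≤ ∑ j, ‖(Submodule.orthogonalProjectionOnto H (v j) : V)‖ ^ 2 := by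
  calc ⟪g, h⟫ ^ 2 ≤ ‖g‖ ^ 2 * ∑ j, ⟪v j, h⟫ ^ 2 := hv.sq_inner_le_of_mem_span hg h
    _ ≤ ∑ j, ‖(H.orthogonalProjectionOnto (v j) : V)‖ ^ 2 * ‖h‖ ^ 2 := by
      rw [hgn, one_pow, one_mul]
      exact Finset.sum_le_sum fun j _ => sq_inner_le_norm_orthogonalProjectionOnto_sq_mul H (v j) hh
    _ = ∑ j, ‖(H.orthogonalProjectionOnto (v j) : V)‖ ^ 2 := by simp only [hhn, one_pow, mul_one]
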